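/- Let n ≥ 2 and let M ∈ ℝ^{n×n} be symmetric with ∑_{i=1}^n M_{ij} = 0 for all j, and suppose there is c_M > 0 such that ∑_{i,j} M_{ij} z_i z_j ≥ c_M |Πz|² for all z ∈ ℝ^n, where Π = I - (1/n)𝟙⊗𝟙. Then for all z ∈ ℝ^n, ∑_{i,j=1}^{n-1} M_{ij}(z_i - z_n)(z_j - z_n) ≥ (c_M/n) ∑_{i=1}^{n-1} (z_i - z_n)². -/
import Mathlib


open Finset

/-- If the symmetric matrix `M` has vanishing column sums and its quadratic form is
coercive on `span{𝟙}^⊥` with constant `c_M`, then the reduced quadratic form controls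
`(c_M/n) ∑ (z_i - z_n)²`. -/
theorem reduced_quadratic_form_coercive
    (n : ℕ) (hn : 1 ≤ n) (M : Fin (n + 1) → Fin (n + 1) → ℝ)
    (hsym : ∀ i j, M i j = M j i)
    (hcol : ∀ j, ∑ i, M i j = 0)
    (cM : ℝ) (hcM : 0 < cM)
    (hcoerc : ∀ z : Fin (n + 1) → ℝ,
      cM * ∑ i, (z i - (∑ j, z j) / (n + 1)) ^ 2 ≤ ∑ i, ∑ j, M i j * z i * z j)
    (z : Fin (n + 1) → ℝ) :
    cM / (n + 1) * ∑ i : Fin n, (z i.castSucc - z (Fin.last n)) ^ 2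
      ≤ ∑ i : Fin n, ∑ j : Fin n,
          M i.castSucc j.castSucc * (z i.castSucc - z (Fin.last n)) *
            (z j.castSucc - z (Fin.last n)) := by
  set w : Fin (n + 1) → ℝ := fun i => z i - z (Fin.last n) with hwdef
  have hwlast : w (Fin.last n) = 0 := by simp [hwdef]
  set s : ℝ := ∑ j, w j with hs
  set T : ℝ := ∑ i : Fin n, w i.castSucc ^ 2 with hT
  have hTall : (∑ i, w i ^ 2) = T := by
    rw [Fin.sum_univ_castSucc, hwlast]; simp [hT]
  have hsT : s = ∑ i : Fin n, w i.castSucc := by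
    rw [hs, Fin.sum_univ_castSucc, hwlast]; ring
  -- Cauchy–Schwarz: s² ≤ n * T
  have hcs : s ^ 2 ≤ n * T := by
    rw [hsT, hT]
    simpa using sq_sum_le_card_mul_sum_sq (s := (univ : Finset (Fin n)))
      (f := fun i => w i.castSucc)
  have hn1 : (0:ℝ) < (n:ℝ) + 1 := by positivity
  -- expand ∑ (w i - s/(n+1))²
  have hexpand : (∑ i, (w i - s / (n + 1)) ^ 2) = (∑ i, w i ^ 2) - s ^ 2 / (n + 1) := by
    have : (∑ i, (w i - s / (n + 1)) ^ 2)
        = (∑ i, w i ^ 2) - 2 * (s / (n + 1)) * s + (n + 1) * (s / (n + 1)) ^ 2 := by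
      rw [Finset.sum_congr rfl (fun i _ => by ring :
        ∀ i ∈ univ, (w i - s / (n + 1)) ^ 2
          = w i ^ 2 - 2 * (s / (n + 1)) * w i + (s / (n + 1)) ^ 2)]
      rw [Finset.sum_add_distrib, Finset.sum_sub_distrib, ← Finset.mul_sum, ← hs]
      simp [Finset.card_univ]
    rw [this]
    field_simp
    ring
  -- key lower bound
  have hkey : T / (n + 1) ≤ ∑ i, (w i - s / (n + 1)) ^ 2 := by
    rw [hexpand, hTall]
    have heq : (∑ i, w i ^ 2) - s ^ 2 / (↑n + 1) - T / (↑n + 1)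
        = (↑n * T - s ^ 2) / (↑n + 1) := by
      rw [hTall]; field_simp; ring
    have : (0:ℝ) ≤ (↑n * T - s ^ 2) / (↑n + 1) :=
      div_nonneg (by linarith) hn1.le
    rw [hTall] at heq
    linarith
  have h1 : cM / (n + 1) * T ≤ cM * ∑ i, (w i - s / (n + 1)) ^ 2 := by
    rw [div_mul_eq_mul_div]
    calc cM * T / (n + 1) = cM * (T / (n + 1)) := by ring
      _ ≤ cM * ∑ i, (w i - s / (n + 1)) ^ 2 :=
        mul_le_mul_of_nonneg_left hkey hcM.le
  have h2 := hcoerc w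
  -- RHS: quadratic form in w equals reduced form
  have hrhs : (∑ i, ∑ j, M i j * w i * w j)
      = ∑ i : Fin n, ∑ j : Fin n, M i.castSucc j.castSucc * w i.castSucc * w j.castSucc := by
    rw [Fin.sum_univ_castSucc]
    simp only [hwlast, mul_zero, zero_mul, Finset.sum_const_zero, add_zero]
    refine Finset.sum_congr rfl fun i _ => ?_
    rw [Fin.sum_univ_castSucc, hwlast]
    ring
  calc cM / (n + 1) * T ≤ cM * ∑ i, (w i - s / (n + 1)) ^ 2 := h1
    _ ≤ ∑ i, ∑ j, M i j * w i * w j := h2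
    _ = _ := hrhs
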